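/- Let G be a locally compact topological gyrogroup and U an open neighborhood of 0 with compact closure. Then the subgyrogroup H = ⟨U⟩ generated by U is an open subgyrogroup of G, and H contains the closure of U (so H is generated by an open subset with compact closure). -/
import Mathlib


universe u

class Gyrogroup (G : Type u) where
  add : G → G → G
  zero : G
  neg : G → G
  gyr : G → G → G → G
  zero_add : ∀ x, add zero x = x
  add_zero : ∀ x, add x zero = x
  neg_add : ∀ x, add (neg x) x = zero
  add_neg : ∀ x, add x (neg x) = zero
  gyr_bij : ∀ x y, Function.Bijective (gyr x y)
  gyr_add : ∀ x y a b, gyr x y (add a b) = add (gyr x y a) (gyr x y b)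
  left_assoc : ∀ x y z, add x (add y z) = add (add x y) (gyr x y z)
  loop : ∀ x y, gyr (add x y) y = gyr x y

namespace Gyrogroup

variable {G : Type u}

instance [Gyrogroup G] : Add G := ⟨Gyrogroup.add⟩
instance [Gyrogroup G] : Zero G := ⟨Gyrogroup.zero⟩
instance [Gyrogroup G] : Neg G := ⟨Gyrogroup.neg⟩

/-- The gyrogroup cooperation `x ⊞ y = x ⊕ gyr[x, ⊖y](y)`. -/
def coadd [Gyrogroup G] (x y : G) : G := x + gyr x (-y) y

/-- `S` is a subgyrogroup: contains the identity and is closed under `⊕`, `⊖` and the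
gyroautomorphisms. -/
def IsSubgyro [Gyrogroup G] (S : Set G) : Prop :=
  (0 : G) ∈ S ∧ (∀ ⦃a b : G⦄, a ∈ S → b ∈ S → a + b ∈ S) ∧
    (∀ ⦃a : G⦄, a ∈ S → -a ∈ S) ∧
    ∀ ⦃a b c : G⦄, a ∈ S → b ∈ S → c ∈ S → gyr a b c ∈ S

/-- The subgyrogroup generated by `A`. -/
def gen [Gyrogroup G] (A : Set G) : Set G := ⋂₀ {S : Set G | IsSubgyro S ∧ A ⊆ S}

/-- `N` is a normal subgyrogroup: the kernel of a gyrogroup homomorphism. -/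
def IsNormalSubgyro [Gyrogroup G] (N : Set G) : Prop :=
  ∃ (H : Type u) (i : Gyrogroup H) (f : G → H),
    (∀ a b : G, f (a + b) = i.add (f a) (f b)) ∧ N = f ⁻¹' {i.zero}

/-- A (Hausdorff) topological gyrogroup. -/
class TopGyrogroup (G : Type u) [Gyrogroup G] [TopologicalSpace G] : Prop where
  t2 : T2Space G
  continuous_add : Continuous fun p : G × G => p.1 + p.2
  continuous_neg : Continuous fun x : G => -x

/-- `μ` is a neighborhood base at `0` consisting of gyr-invariant sets. -/
def IsGyroNhdBase [Gyrogroup G] [TopologicalSpace G] (μ : Set (Set G)) : Prop :=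
  (∀ U ∈ μ, U ∈ nhds (0 : G)) ∧ (∀ W ∈ nhds (0 : G), ∃ U ∈ μ, U ⊆ W) ∧
    ∀ U ∈ μ, ∀ x y : G, gyr x y '' U = U

/-- A strongly topological gyrogroup: some neighborhood base at `0` is gyr-invariant. -/
def StronglyTop (G : Type u) [Gyrogroup G] [TopologicalSpace G] : Prop :=
  ∃ μ : Set (Set G), IsGyroNhdBase μ

/-- `S` is a suitable set for `G`. -/
def IsSuitable [Gyrogroup G] [TopologicalSpace G] (S : Set G) : Prop :=
  DiscreteTopology S ∧ IsClosed (S ∪ {(0 : G)}) ∧ Dense (gen S)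

end Gyrogroup

open Gyrogroup

namespace GyroAux

variable {G : Type u} [Gyrogroup G]

lemma zero_add' (x : G) : (0 : G) + x = x := Gyrogroup.zero_add x
lemma add_zero' (x : G) : x + (0 : G) = x := Gyrogroup.add_zero x
lemma neg_add' (x : G) : -x + x = (0 : G) := Gyrogroup.neg_add x
lemma add_neg' (x : G) : x + -x = (0 : G) := Gyrogroup.add_neg x
lemma left_assoc' (x y z : G) : x + (y + z) = (x + y) + gyr x y z :=
  Gyrogroup.left_assoc x y z

lemma loop' (x y : G) : gyr (x + y) y = gyr x y := Gyrogroup.loop x y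

lemma gyr_inj (x y : G) : Function.Injective (gyr x y) := (Gyrogroup.gyr_bij x y).1

lemma add_left_cancel' {a b c : G} (h : a + b = a + c) : b = c := by
  have h2 : -a + (a + b) = -a + (a + c) := by rw [h]
  rw [left_assoc', left_assoc', neg_add', zero_add', zero_add'] at h2
  exact gyr_inj (-a) a h2

lemma gyr_zero_left (y z : G) : gyr (0 : G) y z = z := by
  have h := left_assoc' (0 : G) y z
  rw [zero_add', zero_add'] at h
  exact (add_left_cancel' h).symm

lemma gyr_neg_self (a z : G) : gyr (-a) a z = z := by
  have h := loop' (-a) a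
  have h' : gyr (-a + a) a z = gyr (-a) a z := by rw [h]
  rw [neg_add', gyr_zero_left] at h'
  exact h'.symm

lemma gyr_self_neg (a z : G) : gyr a (-a) z = z := by
  have h := loop' a (-a)
  have h' : gyr (a + -a) (-a) z = gyr a (-a) z := by rw [h]
  rw [add_neg', gyr_zero_left] at h'
  exact h'.symm

lemma neg_add_cancel_left' (a b : G) : -a + (a + b) = b := by
  rw [left_assoc', neg_add', zero_add', gyr_neg_self]

lemma add_neg_cancel_left' (a b : G) : a + (-a + b) = b := by
  rw [left_assoc', add_neg', zero_add', gyr_self_neg]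

lemma solve (x u : G) : (x + u) + gyr (x + u) u (-u) = x := by
  have h := left_assoc' x u (-u)
  rw [add_neg', add_zero'] at h
  rw [loop' x u]
  exact h.symm

section Top

variable [TopologicalSpace G] [TopGyrogroup G]

lemma continuous_addL (a : G) : Continuous fun x : G => a + x :=
  TopGyrogroup.continuous_add.comp (continuous_const.prodMk continuous_id)

lemma image_addL (a : G) (S : Set G) :
    (fun x : G => a + x) '' S = (fun x : G => -a + x) ⁻¹' S := by
  ext x
  constructor
  · rintro ⟨u, hu, rfl⟩
    simpa [Set.mem_preimage, neg_add_cancel_left'] using hu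
  · intro hx
    exact ⟨-a + x, hx, add_neg_cancel_left' a x⟩

lemma isOpen_addL (a : G) {S : Set G} (hS : IsOpen S) :
    IsOpen ((fun x : G => a + x) '' S) := by
  rw [image_addL]
  exact hS.preimage (continuous_addL (-a))

end Top

lemma isSubgyro_gen (A : Set G) : IsSubgyro (gen A) := by
  refine ⟨?_, ?_, ?_, ?_⟩
  · intro S hS; exact hS.1.1
  · intro a b ha hb S hS
    exact hS.1.2.1 (ha S hS) (hb S hS)
  · intro a ha S hS
    exact hS.1.2.2.1 (ha S hS)
  · intro a b c ha hb hc S hS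
    exact hS.1.2.2.2 (ha S hS) (hb S hS) (hc S hS)

lemma subset_gen (A : Set G) : A ⊆ gen A := by
  intro a ha S hS
  exact hS.2 ha

end GyroAux

open GyroAux in
theorem gen_open_of_compactClosure {G : Type u} [Gyrogroup G] [TopologicalSpace G]
    [TopGyrogroup G] [LocallyCompactSpace G] (U : Set G) (hU : IsOpen U)
    (hU0 : (0 : G) ∈ U) (hUc : IsCompact (closure U)) :
    IsSubgyro (gen U) ∧ IsOpen (gen U) ∧ closure U ⊆ gen U := by
  have hsub : IsSubgyro (gen U) := isSubgyro_gen U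
  have hUH : U ⊆ gen U := subset_gen U
  obtain ⟨h0, hadd, hneg, hgyr⟩ := hsub
  have hopen : IsOpen (gen U) := by
    rw [isOpen_iff_forall_mem_open]
    intro x hx
    refine ⟨(fun u : G => x + u) '' U, ?_, isOpen_addL x hU, ⟨0, hU0, add_zero' x⟩⟩
    rintro _ ⟨u, hu, rfl⟩
    exact hadd hx (hUH hu)
  have hclosed : IsClosed (gen U) := by
    rw [← isOpen_compl_iff, isOpen_iff_forall_mem_open]
    intro x hx
    refine ⟨(fun u : G => x + u) '' U, ?_, isOpen_addL x hU, ⟨0, hU0, add_zero' x⟩⟩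
    rintro _ ⟨u, hu, rfl⟩ hxu
    apply hx
    have := hadd hxu (hgyr hxu (hUH hu) (hneg (hUH hu)))
    rwa [solve x u] at this
  exact ⟨⟨h0, hadd, hneg, hgyr⟩, hopen, closure_minimal hUH hclosed⟩
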